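/- Let W be a fractional edge cover of (the hypergraph with vertex set {1,…,d} and edge set) E with lump-sum ρ* = ∑_{e∈E} W(e), and suppose |R_e| ≤ N for every e ∈ E, where N ≥ 1. For each i ∈ {1,…,d}, let 𝓘_i be a finite family of pairwise disjoint subsets of ℤ. Then for every real Δ > 0, the number of combinations (I_1,…,I_d) ∈ 𝓘_1 × ⋯ × 𝓘_d satisfying ∏_{e ∈ E} |R_e ⋉ B(I_1,…,I_d)|^{W(e)} > Δ is at most N^{ρ*}/Δ. -/

import Mathlib

open Classical

/-- Real power with the convention that `0 ^ y = 0` for every exponent `y`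
(in particular `0 ^ 0 = 0`); for nonzero base it is the usual real power. -/
noncomputable def pow0 (a y : ℝ) : ℝ := if a = 0 then 0 else Real.rpow a y

/-!
Write `c_e(f) = |R_e ⋉ B(I_{f 1}, …, I_{f d})|`. Since the sets in each family are pairwise
disjoint, a tuple of `R_e` lies in the box of at most one choice of the coordinates in `e`, so
summing `c_e` over those coordinates gives at most `|R_e| ≤ N`. Finner's inequality (proved
coordinate by coordinate, each step being Hölder's inequality with exponents `W e` for the edges
through that coordinate, whose sum is at least one by the covering condition) then bounds
`∑_f ∏_e c_e(f) ^ W e` by `∏_e |R_e| ^ W e ≤ N ^ ρ*`, and Markov's inequality finishes.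
-/

open Finset Function
open scoped ENNReal

lemma pow0_nonneg {a : ℝ} (ha : 0 ≤ a) (y : ℝ) : 0 ≤ pow0 a y := by
  unfold pow0
  split_ifs
  exacts [le_rfl, Real.rpow_nonneg ha y]

lemma pow0_of_ne_zero {a : ℝ} (ha : a ≠ 0) (y : ℝ) : pow0 a y = a ^ y :=
  if_neg ha

-- Not an equality: `pow0 0 0 = 0`, whereas `0 ^ 0 = 1` in `ℝ≥0∞`.
lemma ENNReal.ofReal_pow0_le {a y : ℝ} (ha : 0 ≤ a) (hy : 0 ≤ y) :
    ENNReal.ofReal (pow0 a y) ≤ ENNReal.ofReal a ^ y := by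
  rcases eq_or_ne a 0 with rfl | ha0
  · simp [pow0]
  · rw [pow0_of_ne_zero ha0, ENNReal.ofReal_rpow_of_nonneg ha hy]

namespace ENNReal

theorem sum_rpow_le_rpow_sum {κ : Type*} (s : Finset κ) (f : κ → ℝ≥0∞) {p : ℝ}
    (hp : 1 ≤ p) : ∑ x ∈ s, f x ^ p ≤ (∑ x ∈ s, f x) ^ p := by
  induction s using Finset.induction_on with
  | empty => simp [ENNReal.zero_rpow_of_pos (by linarith : (0 : ℝ) < p)]
  | insert a s ha ih =>
    rw [sum_insert ha, sum_insert ha]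
    exact (add_le_add_right ih _).trans (add_rpow_le_rpow_add _ _ hp)

variable {ι κ : Type*} [Fintype κ]

theorem sum_prod_rpow_le_of_sum_eq_one (s : Finset ι) (f : ι → κ → ℝ≥0∞) {p : ι → ℝ}
    (hp : ∀ j ∈ s, 0 ≤ p j) (hp1 : ∑ j ∈ s, p j = 1) :
    ∑ x, ∏ j ∈ s, f j x ^ p j ≤ ∏ j ∈ s, (∑ x, f j x) ^ p j := by
  let _ : MeasurableSpace κ := ⊤
  simpa [MeasureTheory.lintegral_fintype] using
    lintegral_prod_norm_pow_le (μ := .count) s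
      (fun j _ ↦ (Measurable.of_discrete (f := f j)).aemeasurable) hp1 hp

theorem sum_prod_rpow_le_of_one_le_sum (s : Finset ι) (f : ι → κ → ℝ≥0∞) {p : ι → ℝ}
    (hp : ∀ j ∈ s, 0 ≤ p j) (hp1 : 1 ≤ ∑ j ∈ s, p j) :
    ∑ x, ∏ j ∈ s, f j x ^ p j ≤ ∏ j ∈ s, (∑ x, f j x) ^ p j := by
  set c := ∑ j ∈ s, p j
  have hc : 0 < c := by linarith
  have hq : ∀ j ∈ s, 0 ≤ p j / c := fun j hj ↦ div_nonneg (hp j hj) hc.le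
  have hq1 : ∑ j ∈ s, p j / c = 1 := by rw [← sum_div, div_self hc.ne']
  have hscale : ∀ a : ι → ℝ≥0∞, ∏ j ∈ s, a j ^ p j = (∏ j ∈ s, a j ^ (p j / c)) ^ c := by
    intro a
    rw [← prod_rpow_of_nonneg hc.le]
    refine prod_congr rfl fun j _ ↦ ?_
    rw [← rpow_mul, div_mul_cancel₀ _ hc.ne']
  calc ∑ x, ∏ j ∈ s, f j x ^ p j = ∑ x, (∏ j ∈ s, f j x ^ (p j / c)) ^ c := by
        simp only [hscale fun j ↦ f j _]
    _ ≤ (∑ x, ∏ j ∈ s, f j x ^ (p j / c)) ^ c := sum_rpow_le_rpow_sum _ _ hp1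
    _ ≤ (∏ j ∈ s, (∑ x, f j x) ^ (p j / c)) ^ c :=
        rpow_le_rpow (sum_prod_rpow_le_of_sum_eq_one s f hq hq1) hc.le
    _ = ∏ j ∈ s, (∑ x, f j x) ^ p j := (hscale _).symm

end ENNReal

section Slice

variable {ι : Type*} [Fintype ι] [DecidableEq ι] {α : ι → Type*} [∀ i, Fintype (α i)]
  [∀ i, DecidableEq (α i)]

-- Summing over `sliceThrough A x` is the counting-measure analogue of `MeasureTheory.lmarginal`.
def sliceThrough (A : Finset ι) (x : ∀ i, α i) : Finset (∀ i, α i) :=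
  univ.filter fun y ↦ ∀ i ∉ A, y i = x i

@[simp]
lemma mem_sliceThrough {A : Finset ι} {x y : ∀ i, α i} :
    y ∈ sliceThrough A x ↔ ∀ i ∉ A, y i = x i := by
  simp [sliceThrough]

lemma sliceThrough_empty (x : ∀ i, α i) : sliceThrough ∅ x = {x} := by
  ext y
  simp [funext_iff]

lemma sliceThrough_univ (x : ∀ i, α i) : sliceThrough univ x = univ := by
  ext y
  simp

lemma filter_sliceThrough_insert {A : Finset ι} {i : ι} (hi : i ∉ A) (x : ∀ i, α i) (a : α i) :
    (sliceThrough (insert i A) x).filter (fun y ↦ y i = a) = sliceThrough A (update x i a) := by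
  ext y
  simp only [mem_filter, mem_sliceThrough, mem_insert, not_or]
  constructor
  · rintro ⟨hy, rfl⟩ j hj
    by_cases hji : j = i
    · subst hji; simp
    · rw [update_of_ne hji]; exact hy j ⟨hji, hj⟩
  · intro hy
    refine ⟨fun j hj ↦ ?_, by simpa using hy i hi⟩
    rw [hy j hj.2, update_of_ne hj.1]

lemma sum_sliceThrough_insert {M : Type*} [AddCommMonoid M] {A : Finset ι} {i : ι} (hi : i ∉ A)
    (x : ∀ i, α i) (F : (∀ i, α i) → M) :
    ∑ y ∈ sliceThrough (insert i A) x, F y = ∑ a, ∑ y ∈ sliceThrough A (update x i a), F y := by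
  rw [← sum_fiberwise (sliceThrough (insert i A) x) (fun y ↦ y i)]
  simp only [filter_sliceThrough_insert hi]

lemma DependsOn.sum_sliceThrough {M : Type*} [AddCommMonoid M] {T : (∀ i, α i) → M}
    {s : Set ι} (hT : DependsOn T s) (A : Finset ι) :
    DependsOn (fun x ↦ ∑ y ∈ sliceThrough A x, T y) s := by
  intro x x' hxx'
  let glue (z : ∀ i, α i) (y : ∀ i, α i) : ∀ i, α i := fun j ↦ if j ∈ A then y j else z j
  refine sum_nbij' (glue x') (glue x) ?_ ?_ ?_ ?_ ?_
  · intro y _; simp +contextual [glue]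
  · intro y _; simp +contextual [glue]
  · intro y hy; ext j; by_cases hj : j ∈ A <;> simp_all [glue]
  · intro y hy; ext j; by_cases hj : j ∈ A <;> simp_all [glue]
  · intro y hy
    refine hT fun j hj ↦ ?_
    by_cases hjA : j ∈ A <;> simp_all [glue]

theorem sum_sliceThrough_prod_rpow_le (E : Finset (Finset ι)) {v : Finset ι → ℝ}
    (hv : ∀ e ∈ E, 0 ≤ v e) (hcov : ∀ i, 1 ≤ ∑ e ∈ E.filter (fun e ↦ i ∈ e), v e)
    {g : Finset ι → (∀ i, α i) → ℝ≥0∞} (hg : ∀ e ∈ E, DependsOn (g e) e)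
    (A : Finset ι) (x : ∀ i, α i) :
    ∑ y ∈ sliceThrough A x, ∏ e ∈ E, g e y ^ v e
      ≤ ∏ e ∈ E, (∑ y ∈ sliceThrough (e ∩ A) x, g e y) ^ v e := by
  induction A using Finset.induction_on generalizing x with
  | empty => simp [sliceThrough_empty]
  | insert i A hi ih =>
    set M : Finset ι → (∀ i, α i) → ℝ≥0∞ := fun e z ↦ ∑ y ∈ sliceThrough (e ∩ A) z, g e y
    have hM : ∀ e ∈ E, i ∉ e → ∀ a, M e (update x i a) = M e x := fun e he hie a ↦
      (hg e he).sum_sliceThrough _ fun j hj ↦ update_of_ne (ne_of_mem_of_not_mem hj hie) _ _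
    calc ∑ y ∈ sliceThrough (insert i A) x, ∏ e ∈ E, g e y ^ v e
        = ∑ a, ∑ y ∈ sliceThrough A (update x i a), ∏ e ∈ E, g e y ^ v e :=
          sum_sliceThrough_insert hi x _
      _ ≤ ∑ a, ∏ e ∈ E, M e (update x i a) ^ v e := sum_le_sum fun a _ ↦ ih _
      _ = (∑ a, ∏ e ∈ E.filter (i ∈ ·), M e (update x i a) ^ v e)
            * ∏ e ∈ E.filter (i ∉ ·), M e x ^ v e := by
          rw [sum_mul]
          refine sum_congr rfl fun a _ ↦ ?_
          rw [← prod_filter_mul_prod_filter_not E (i ∈ ·)]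
          congr 1
          refine prod_congr rfl fun e he ↦ ?_
          rw [mem_filter] at he
          rw [hM e he.1 he.2]
      _ ≤ (∏ e ∈ E.filter (i ∈ ·), (∑ a, M e (update x i a)) ^ v e)
            * ∏ e ∈ E.filter (i ∉ ·), M e x ^ v e := by
          gcongr
          exact ENNReal.sum_prod_rpow_le_of_one_le_sum _ _
            (fun e he ↦ hv e (mem_filter.1 he).1) (hcov i)
      _ = ∏ e ∈ E, (∑ y ∈ sliceThrough (e ∩ insert i A) x, g e y) ^ v e := by
          rw [← prod_filter_mul_prod_filter_not E (i ∈ ·)]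
          congr 1
          · refine prod_congr rfl fun e he ↦ ?_
            have hie := (mem_filter.1 he).2
            rw [inter_insert_of_mem hie, sum_sliceThrough_insert (fun h ↦ hi (mem_inter.1 h).2)]
          · refine prod_congr rfl fun e he ↦ ?_
            rw [inter_insert_of_notMem (mem_filter.1 he).2]

variable {β : Type*}

lemma sum_sliceThrough_card_filter_mem_box_le (R : Finset (ι → β)) {I : ∀ i, α i → Set β}
    (hI : ∀ i, Pairwise (Disjoint on I i)) (e : Finset ι) (x : ∀ i, α i) :
    ∑ y ∈ sliceThrough e x, #(R.filter fun t ↦ ∀ i ∈ e, t i ∈ I i (y i)) ≤ #R := by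
  rw [← card_biUnion]
  · exact card_le_card (biUnion_subset.2 fun y _ ↦ filter_subset _ _)
  · intro y hy y' hy' hne
    refine disjoint_left.2 fun t ht ht' ↦ hne (funext fun i ↦ ?_)
    by_cases hie : i ∈ e
    · by_contra hyi
      exact Set.disjoint_left.1 (hI i hyi) ((mem_filter.1 ht).2 i hie) ((mem_filter.1 ht').2 i hie)
    · rw [mem_coe, mem_sliceThrough] at hy hy'
      rw [hy i hie, hy' i hie]

theorem sum_prod_card_filter_mem_box_rpow_le (E : Finset (Finset ι)) {W : Finset ι → ℝ}
    (hW : ∀ e ∈ E, 0 ≤ W e) (hcov : ∀ i, 1 ≤ ∑ e ∈ E.filter (fun e ↦ i ∈ e), W e)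
    (R : Finset ι → Finset (ι → β)) {I : ∀ i, α i → Set β}
    (hI : ∀ i, Pairwise (Disjoint on I i)) :
    ∑ y : ∀ i, α i, ∏ e ∈ E, (#((R e).filter fun t ↦ ∀ i ∈ e, t i ∈ I i (y i)) : ℝ≥0∞) ^ W e
      ≤ ∏ e ∈ E, (#(R e) : ℝ≥0∞) ^ W e := by
  rcases isEmpty_or_nonempty (∀ i, α i) with _ | ⟨⟨x⟩⟩
  · simp
  have hdep : ∀ e ∈ E, DependsOn
      (fun y : ∀ i, α i ↦ (#((R e).filter fun t ↦ ∀ i ∈ e, t i ∈ I i (y i)) : ℝ≥0∞)) e := by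
    intro e _ y y' h
    simp only [Nat.cast_inj]
    congr 1
    exact filter_congr fun t _ ↦ forall₂_congr fun i hi ↦ by rw [h i hi]
  refine (sliceThrough_univ x ▸ sum_sliceThrough_prod_rpow_le E hW hcov hdep univ x).trans ?_
  refine prod_le_prod' fun e he ↦ ENNReal.rpow_le_rpow ?_ (hW e he)
  rw [inter_univ, ← Nat.cast_sum]
  exact_mod_cast sum_sliceThrough_card_filter_mem_box_le (R e) hI e x

theorem sum_prod_pow0_card_filter_mem_box_le (E : Finset (Finset ι)) {W : Finset ι → ℝ}
    (hW : ∀ e ∈ E, 0 ≤ W e) (hcov : ∀ i, 1 ≤ ∑ e ∈ E.filter (fun e ↦ i ∈ e), W e)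
    (R : Finset ι → Finset (ι → β)) {I : ∀ i, α i → Set β}
    (hI : ∀ i, Pairwise (Disjoint on I i)) {N : ℝ} (hN : 0 < N)
    (hsize : ∀ e ∈ E, (#(R e) : ℝ) ≤ N) :
    ∑ y : ∀ i, α i, ∏ e ∈ E, pow0 (#((R e).filter fun t ↦ ∀ i ∈ e, t i ∈ I i (y i)) : ℝ) (W e)
      ≤ N ^ ∑ e ∈ E, W e := by
  have hX : ∀ y : ∀ i, α i, ∀ e ∈ E,
      0 ≤ pow0 (#((R e).filter fun t ↦ ∀ i ∈ e, t i ∈ I i (y i)) : ℝ) (W e) :=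
    fun y e _ ↦ pow0_nonneg (Nat.cast_nonneg _) _
  rw [← ENNReal.ofReal_le_ofReal_iff (by positivity),
    ENNReal.ofReal_sum_of_nonneg fun y _ ↦ prod_nonneg (hX y)]
  calc _ ≤ ∑ y : ∀ i, α i,
        ∏ e ∈ E, (#((R e).filter fun t ↦ ∀ i ∈ e, t i ∈ I i (y i)) : ℝ≥0∞) ^ W e := by
        refine sum_le_sum fun y _ ↦ ?_
        rw [ENNReal.ofReal_prod_of_nonneg (hX y)]
        refine prod_le_prod' fun e he ↦ ?_
        simpa using ENNReal.ofReal_pow0_le (Nat.cast_nonneg _) (hW e he)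
    _ ≤ ∏ e ∈ E, (#(R e) : ℝ≥0∞) ^ W e := sum_prod_card_filter_mem_box_rpow_le E hW hcov R hI
    _ ≤ ∏ e ∈ E, ENNReal.ofReal (N ^ W e) := by
        refine prod_le_prod' fun e he ↦ ?_
        rw [← ENNReal.ofReal_rpow_of_nonneg hN.le (hW e he), ← ENNReal.ofReal_natCast]
        exact ENNReal.rpow_le_rpow (ENNReal.ofReal_le_ofReal (hsize e he)) (hW e he)
    _ = ENNReal.ofReal (N ^ ∑ e ∈ E, W e) := by
        rw [← ENNReal.ofReal_prod_of_nonneg fun e _ ↦ by positivity, Real.rpow_sum_of_pos hN]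

end Slice

theorem Finset.card_filter_lt_le_sum_div {κ : Type*} (s : Finset κ) {X : κ → ℝ}
    (hX : ∀ x ∈ s, 0 ≤ X x) {Δ : ℝ} (hΔ : 0 < Δ) :
    (#(s.filter fun x ↦ Δ < X x) : ℝ) ≤ (∑ x ∈ s, X x) / Δ := by
  rw [le_div_iff₀ hΔ, ← nsmul_eq_mul]
  calc #(s.filter fun x ↦ Δ < X x) • Δ ≤ ∑ x ∈ s.filter (fun x ↦ Δ < X x), X x :=
        card_nsmul_le_sum _ _ _ fun x hx ↦ (mem_filter.1 hx).2.le
    _ ≤ ∑ x ∈ s, X x := sum_le_sum_of_subset_of_nonneg (filter_subset _ _) fun x hx _ ↦ hX x hx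

theorem heavy_combination_count_bound_general
    (d : ℕ)
    (E : Finset (Finset (Fin d)))
    (R : Finset (Fin d) → Finset (Fin d → ℤ))
    (W : Finset (Fin d) → ℝ) (hW : ∀ e ∈ E, 0 ≤ W e)
    (hcov : ∀ i : Fin d, 1 ≤ ∑ e ∈ E.filter (fun e => i ∈ e), W e)
    (N : ℝ) (hN : 1 ≤ N) (hsize : ∀ e ∈ E, ((R e).card : ℝ) ≤ N)
    (K : Fin d → ℕ) (I : (i : Fin d) → Fin (K i) → Set ℤ)
    (hdisj : ∀ i : Fin d, ∀ a b : Fin (K i), a ≠ b → Disjoint (I i a) (I i b))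
    (Δ : ℝ) (hΔ : 0 < Δ) :
    ((Finset.univ.filter (fun f : (i : Fin d) → Fin (K i) =>
        Δ < ∏ e ∈ E,
          pow0 (((R e).filter (fun t => ∀ i ∈ e, t i ∈ I i (f i))).card : ℝ) (W e))).card : ℝ)
      ≤ pow0 N (∑ e ∈ E, W e) / Δ := by
  have hN0 : 0 < N := zero_lt_one.trans_le hN
  rw [pow0_of_ne_zero hN0.ne']
  have hsum := sum_prod_pow0_card_filter_mem_box_le E hW hcov R
    (fun i _ _ hab ↦ hdisj i _ _ hab) hN0 hsize
  refine (card_filter_lt_le_sum_div univ (fun f _ ↦ prod_nonneg fun e _ ↦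
    pow0_nonneg (Nat.cast_nonneg _) _) hΔ).trans
    (div_le_div_of_nonneg_right (Eq.trans_le ?_ hsum) hΔ.le)
  -- the two sums differ only in the `Decidable` instances of the box predicate
  congr!

theorem heavy_combination_count_bound
    (d : ℕ) (hd : 0 < d)
    (E : Finset (Finset (Fin d))) (hE : E.Nonempty) (hEne : ∀ e ∈ E, e.Nonempty)
    (R : Finset (Fin d) → Finset (Fin d → ℤ))
    (W : Finset (Fin d) → ℝ) (hW : ∀ e ∈ E, 0 ≤ W e)
    (hcov : ∀ i : Fin d, 1 ≤ ∑ e ∈ E.filter (fun e => i ∈ e), W e)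
    (N : ℝ) (hN : 1 ≤ N) (hsize : ∀ e ∈ E, ((R e).card : ℝ) ≤ N)
    (K : Fin d → ℕ) (I : (i : Fin d) → Fin (K i) → Set ℤ)
    (hdisj : ∀ i : Fin d, ∀ a b : Fin (K i), a ≠ b → Disjoint (I i a) (I i b))
    (Δ : ℝ) (hΔ : 0 < Δ) :
    ((Finset.univ.filter (fun f : (i : Fin d) → Fin (K i) =>
        Δ < ∏ e ∈ E,
          pow0 (((R e).filter (fun t => ∀ i ∈ e, t i ∈ I i (f i))).card : ℝ) (W e))).card : ℝ)
      ≤ pow0 N (∑ e ∈ E, W e) / Δ :=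
  heavy_combination_count_bound_general d E R W hW hcov N hN hsize K I hdisj Δ hΔ
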